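/- arXiv:1904.03843 — 8 statements merged into one kernel-verified Lean document; each statement's English description precedes it below -/
import Mathlib

section
/- Let S = (V,H) be a finite simplicial complex and let k ≥ 1. Then the lattice of flats of the k-truncation T_k(S) equals {X ∈ L(S) : no facet of T_k(S) is contained in X} ∪ {V}. -/
open scoped Classical

variable {V : Type*}

/-- A (finite) simplicial complex on vertex set `V`: all singletons are faces and
faces are closed under taking subsets. -/
def IsSimplicialComplex [DecidableEq V] (H : Set (Finset V)) : Prop :=
  (∀ v : V, {v} ∈ H) ∧ ∀ X ∈ H, ∀ Y ⊆ X, Y ∈ H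

/-- `F` is a flat of the complex with faces `H`. -/
def IsFlat [DecidableEq V] (H : Set (Finset V)) (F : Finset V) : Prop :=
  ∀ I ∈ H, I ⊆ F → ∀ p ∉ F, insert p I ∈ H

/-- `X` is a facet (maximal face) of `H`. -/
def IsFacet (H : Set (Finset V)) (X : Finset V) : Prop :=
  X ∈ H ∧ ∀ Y ∈ H, X ⊆ Y → Y = X

/-- The `k`-truncation of the family of faces `H`. -/
def trunc (H : Set (Finset V)) (k : ℕ) : Set (Finset V) :=
  {X ∈ H | X.card ≤ k}

/-- `H` has dimension `d`: some face has `d+1` elements and all faces have at most `d+1`. -/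
def HasDim (H : Set (Finset V)) (d : ℕ) : Prop :=
  (∃ X ∈ H, X.card = d + 1) ∧ ∀ X ∈ H, X.card ≤ d + 1

/-- `H` is paving of dimension `d`: every `d`-subset is a face and the maximal face
cardinality is `d+1`. -/
def PavingDim (H : Set (Finset V)) (d : ℕ) : Prop :=
  (∀ X : Finset V, X.card = d → X ∈ H) ∧ (∃ X ∈ H, X.card = d + 1) ∧
    ∀ X ∈ H, X.card ≤ d + 1

/-- `X` is a transversal of the successive differences for a chain
`C 0 ⊆ C 1 ⊆ … ⊆ C k` in the family `F`, i.e. `X` enumerates as `x 0, …, x (k-1)`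
with `x i ∈ C (i+1) \ C i`. -/
def Transversal [DecidableEq V] (F : Set (Finset V)) (X : Finset V) : Prop :=
  ∃ (k : ℕ) (x : Fin k → V) (C : Fin (k + 1) → Finset V),
    Function.Injective x ∧
    X = Finset.image x Finset.univ ∧
    (∀ i, C i ∈ F) ∧
    (∀ i : Fin k, C i.castSucc ⊆ C i.succ) ∧
    (∀ i : Fin k, x i ∈ C i.succ ∧ x i ∉ C i.castSucc)

/-- The set of all transversals of the successive differences for chains in `F`. -/
def Tr [DecidableEq V] (F : Set (Finset V)) : Set (Finset V) :=
  {X | Transversal F X}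

/-- `H` is boolean representable: its faces are exactly the transversals of the
successive differences for chains in its lattice of flats. -/
def BooleanRepresentable [DecidableEq V] (H : Set (Finset V)) : Prop :=
  H = Tr {F | IsFlat H F}

/-- The family `ε(S)` for a complex of dimension `d`. -/
def eps [DecidableEq V] (H : Set (Finset V)) (d : ℕ) : Set (Finset V) :=
  {X | ∀ Y ∈ H, Y ⊆ X → Y.card ≤ d → ∀ p ∉ X, insert p Y ∈ H}

/-- `H` is a truncated boolean representable simplicial complex. -/
def IsTBRSC [DecidableEq V] (H : Set (Finset V)) : Prop :=
  ∃ (H' : Set (Finset V)) (k : ℕ), 1 ≤ k ∧ IsSimplicialComplex H' ∧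
    BooleanRepresentable H' ∧ H = trunc H' k

/-- The complex `B_d(V,L)`. -/
def Bd [DecidableEq V] (d : ℕ) (L : Finset V) : Set (Finset V) :=
  {X | X.card ≤ d} ∪ {X | X.card = d + 1 ∧ (X ∩ L).card = d}

/-- The closure of `X`: the intersection of all flats containing `X`. -/
noncomputable def cl [Fintype V] [DecidableEq V] (H : Set (Finset V)) (X : Finset V) :
    Finset V :=
  Finset.univ.filter fun v => ∀ F : Finset V, IsFlat H F → X ⊆ F → v ∈ F

/-- `H` is a near-matroid. -/
def NearMatroid [Fintype V] [DecidableEq V] (H : Set (Finset V)) : Prop :=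
  ∀ X ∈ H, ∀ Y ∈ H, cl H X = cl H Y → cl H X ≠ Finset.univ → X.card = Y.card

/-- `H` is a matroid: a simplicial complex with the exchange property. -/
def IsMatroid [DecidableEq V] (H : Set (Finset V)) : Prop :=
  IsSimplicialComplex H ∧
    ∀ I ∈ H, ∀ J ∈ H, I.card = J.card + 1 → ∃ i ∈ I, i ∉ J ∧ insert i J ∈ H

section Truncation

variable {H : Set (Finset V)} {k : ℕ} {F X I : Finset V} {p : V}

theorem isFacet_trunc_of_card_eq (hX : X ∈ H) (hXk : X.card = k) : IsFacet (trunc H k) X :=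
  ⟨⟨hX, hXk.le⟩, fun _ hY hXY => (Finset.eq_of_subset_of_card_le hXY (hXk ▸ hY.2)).symm⟩

variable [DecidableEq V]

theorem IsSimplicialComplex.isLowerSet (hS : IsSimplicialComplex H) : IsLowerSet H :=
  fun _ Y hYX hX => hS.2 _ hX Y hYX

theorem isFlat_univ [Fintype V] : IsFlat H Finset.univ :=
  fun _ _ _ p hp => absurd (Finset.mem_univ p) hp

/-- Below a proper flat of the truncation every face is small: a `k`-subset of it could be
extended by an outside point to a face of the truncation with `k + 1` elements. -/
theorem IsFlat.card_lt_of_trunc (hH : IsLowerSet H) (hF : IsFlat (trunc H k) F) (hp : p ∉ F)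
    (hI : I ∈ H) (hIF : I ⊆ F) : I.card < k := by
  by_contra! hkI
  obtain ⟨J, hJI, hJk⟩ := Finset.exists_subset_card_eq hkI
  have hpJ : p ∉ J := fun hpJ => hp (hIF (hJI hpJ))
  have hcard := (hF J ⟨hH hJI hI, hJk.le⟩ (hJI.trans hIF) p hp).2
  rw [Finset.card_insert_of_notMem hpJ, hJk] at hcard
  omega

theorem IsFlat.of_trunc (hH : IsLowerSet H) (hF : IsFlat (trunc H k) F) (hp : p ∉ F) :
    IsFlat H F :=
  fun I hI hIF q hq => (hF I ⟨hI, (hF.card_lt_of_trunc hH hp hI hIF).le⟩ hIF q hq).1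

theorem IsFlat.not_isFacet_subset (hF : IsFlat H F) (hp : p ∉ F) (hX : IsFacet H X) :
    ¬ X ⊆ F := by
  intro hXF
  have hpX : insert p X = X := hX.2 _ (hF X hX.1 hXF p hp) (Finset.subset_insert p X)
  exact hp (hXF (hpX ▸ Finset.mem_insert_self p X))

theorem IsFlat.trunc (hF : IsFlat H F) (hfacet : ∀ X, IsFacet (trunc H k) X → ¬ X ⊆ F) :
    IsFlat (trunc H k) F := by
  intro I hI hIF q hq
  have hIk : I.card < k :=
    hI.2.lt_of_ne fun hIk => hfacet I (isFacet_trunc_of_card_eq hI.1 hIk) hIF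
  refine ⟨hF I hI.1 hIF q hq, ?_⟩
  rw [Finset.card_insert_of_notMem fun hqI => hq (hIF hqI)]
  exact hIk

end Truncation

theorem stmt_0_general [Fintype V] [DecidableEq V]
    (H : Set (Finset V)) (hS : IsSimplicialComplex H) (k : ℕ) :
    {F : Finset V | IsFlat (trunc H k) F} =
      {F : Finset V | IsFlat H F ∧ ∀ X : Finset V, IsFacet (trunc H k) X → ¬ X ⊆ F}
        ∪ {Finset.univ} := by
  ext F
  simp only [Set.mem_ofPred_eq, Set.mem_union, Set.mem_singleton_iff]
  constructor
  · intro hF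
    by_cases hFu : F = Finset.univ
    · exact Or.inr hFu
    obtain ⟨p, hp⟩ : ∃ p, p ∉ F := by simpa [Finset.eq_univ_iff_forall] using hFu
    exact Or.inl ⟨hF.of_trunc hS.isLowerSet hp, fun _ => hF.not_isFacet_subset hp⟩
  · rintro (⟨hflat, hfacet⟩ | rfl)
    · exact hflat.trunc hfacet
    · exact isFlat_univ

theorem stmt_0 [Fintype V] [DecidableEq V] [Nonempty V]
    (H : Set (Finset V)) (hS : IsSimplicialComplex H) (k : ℕ) (hk : 1 ≤ k) :
    {F : Finset V | IsFlat (trunc H k) F} =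
      {F : Finset V | IsFlat H F ∧ ∀ X : Finset V, IsFacet (trunc H k) X → ¬ X ⊆ F}
        ∪ {Finset.univ} :=
  stmt_0_general H hS k
end

section
/- Let S = (V,H) be a finite simplicial complex of dimension d. Then every transversal of the successive differences for a chain in ε(S) that has at most d+1 elements is a face of S; that is, T_{d+1}(H^ε) ⊆ H, where H^ε = Tr(ε(S)). -/
open scoped Classical

variable {V : Type*}

theorem stmt_2 [Fintype V] [DecidableEq V] [Nonempty V]
    (H : Set (Finset V)) (hS : IsSimplicialComplex H) (d : ℕ) (hd : HasDim H d) :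
    trunc (Tr (eps H d)) (d + 1) ⊆ H := by
  rintro X ⟨⟨k, x, C, hinj, hX, hC, hmono, hx⟩, hcard⟩
  have hcardX : X.card = k := by
    rw [hX, Finset.card_image_of_injective _ hinj, Finset.card_univ, Fintype.card_fin]
  have hk : k ≤ d + 1 := hcardX ▸ hcard
  have hchain : ∀ i j : Fin (k + 1), i ≤ j → C i ⊆ C j := by
    intro i j hij
    have hij' : (i : ℕ) ≤ (j : ℕ) := hij
    obtain ⟨n, hn⟩ := Nat.exists_eq_add_of_le hij'
    clear hij hij'
    induction n generalizing j with
    | zero => have : i = j := Fin.ext (by omega); subst this; exact subset_rfl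
    | succ n ih =>
      have hjv : (j : ℕ) = (i : ℕ) + n + 1 := by omega
      have hlt : (i : ℕ) + n < k + 1 := by omega
      have hnk : (i : ℕ) + n < k := by
        have := j.isLt; omega
      refine (ih ⟨(i : ℕ) + n, hlt⟩ rfl).trans ?_
      have := hmono ⟨(i : ℕ) + n, hnk⟩
      have h1 : (⟨(i : ℕ) + n, hnk⟩ : Fin k).castSucc = ⟨(i : ℕ) + n, hlt⟩ := rfl
      have h2 : (⟨(i : ℕ) + n, hnk⟩ : Fin k).succ = j := Fin.ext (by simp [hjv])
      rw [h1, h2] at this; exact this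
  have hempty : ∅ ∈ H := by
    obtain ⟨v⟩ := ‹Nonempty V›
    exact hS.2 _ (hS.1 v) ∅ (Finset.empty_subset _)
  have key : ∀ i : ℕ, (hi : i ≤ k) →
      ((Finset.univ.filter fun j : Fin k => (j : ℕ) < i).image x) ∈ H ∧
      ((Finset.univ.filter fun j : Fin k => (j : ℕ) < i).image x) ⊆ C ⟨i, by omega⟩ := by
    intro i hi
    induction i with
    | zero =>
      have : (Finset.univ.filter fun j : Fin k => (j : ℕ) < 0) = ∅ := by
        ext j; simp
      rw [this]; simp [hempty]
    | succ i ih =>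
      have hik : i < k := hi
      obtain ⟨hYH, hYC⟩ := ih (le_of_lt hik)
      set Y := (Finset.univ.filter fun j : Fin k => (j : ℕ) < i).image x with hY
      have hcardY : Y.card = i := by
        rw [hY, Finset.card_image_of_injective _ hinj]
        have : (Finset.univ.filter fun j : Fin k => (j : ℕ) < i) = Finset.Iio ⟨i, hik⟩ := by
          ext j; simp [Fin.lt_def]
        rw [this, Fin.card_Iio]
      have hid : i ≤ d := by omega
      have hcastv : ((⟨i, hik⟩ : Fin k).castSucc : Fin (k+1)) = ⟨i, by omega⟩ := rfl
      have hsuccv : ((⟨i, hik⟩ : Fin k).succ : Fin (k+1)) = ⟨i + 1, by omega⟩ := rfl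
      have hxi := hx ⟨i, hik⟩
      have hpnot : x ⟨i, hik⟩ ∉ C ⟨i, by omega⟩ := by rw [← hcastv]; exact hxi.2
      have heps := hC ⟨i, (by omega : i < k + 1)⟩
      have hins : insert (x ⟨i, hik⟩) Y ∈ H :=
        heps Y hYH hYC (hcardY ▸ hid) _ hpnot
      have hset : (Finset.univ.filter fun j : Fin k => (j : ℕ) < i + 1) =
          insert (⟨i, hik⟩ : Fin k) (Finset.univ.filter fun j : Fin k => (j : ℕ) < i) := by
        ext j
        simp only [Finset.mem_filter, Finset.mem_univ, true_and, Finset.mem_insert]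
        constructor
        · intro h
          rcases Nat.lt_succ_iff_lt_or_eq.mp h with h | h
          · exact Or.inr h
          · exact Or.inl (Fin.ext h)
        · rintro (h | h)
          · subst h; simp
          · omega
      have himg : (Finset.univ.filter fun j : Fin k => (j : ℕ) < i + 1).image x =
          insert (x ⟨i, hik⟩) Y := by
        rw [hset, Finset.image_insert]
      constructor
      · rw [himg]; exact hins
      · rw [himg]
        intro v hv
        rcases Finset.mem_insert.mp hv with h | h
        · subst h
          have : x ⟨i, hik⟩ ∈ C (⟨i, hik⟩ : Fin k).succ := hxi.1
          rw [hsuccv] at this; exact this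
        · exact hchain ⟨i, by omega⟩ ⟨i + 1, by omega⟩ (Fin.mk_le_mk.mpr (by omega)) (hYC h)
  have hfin := (key k le_rfl).1
  have : (Finset.univ.filter fun j : Fin k => (j : ℕ) < k) = Finset.univ := by
    ext j; simp [j.isLt]
  rw [this] at hfin
  rwa [hX]
end

section
/- Let S = (V,H) be a finite simplicial complex of dimension d. Then S is the (d+1)-truncation of some boolean representable simplicial complex if and only if S = T_{d+1}(S^ε), where S^ε = (V, Tr(ε(S))). Moreover, in this case L(S^ε) = ε(S). -/
open scoped Classical

variable {V : Type*}

section Aux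

variable [DecidableEq V]

/-- Monotonicity of `Tr`. -/
lemma tr_mono {F G : Set (Finset V)} (h : F ⊆ G) : Tr F ⊆ Tr G := by
  rintro X ⟨k, x, C, hinj, hX, hCF, hmono, hx⟩
  exact ⟨k, x, C, hinj, hX, fun i => h (hCF i), hmono, hx⟩

/-- Chains are monotone between any two comparable indices. -/
lemma chainMono {k : ℕ} (C : Fin (k + 1) → Finset V)
    (h : ∀ i : Fin k, C i.castSucc ⊆ C i.succ) :
    ∀ j i : Fin (k + 1), i ≤ j → C i ⊆ C j := by
  intro j
  induction j using Fin.induction with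
  | zero =>
    intro i hi
    have : i = 0 := le_antisymm hi (Fin.zero_le i)
    rw [this]
  | succ n ih =>
    intro i hi
    rcases hi.lt_or_eq with hlt | rfl
    · have hle : i ≤ n.castSucc := by
        have h1 : (i : ℕ) < (n : ℕ) + 1 := by
          simpa [Fin.lt_def] using hlt
        simp only [Fin.le_def, Fin.coe_castSucc]
        omega
      exact (ih i hle).trans (h n)
    · exact Finset.Subset.refl _

/-- `Tr F` is closed under taking subsets. -/
lemma tr_downward {F : Set (Finset V)} {X Y : Finset V}
    (hX : X ∈ Tr F) (hYX : Y ⊆ X) : Y ∈ Tr F := by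
  obtain ⟨k, x, C, hinj, hXeq, hCF, hmono, hx⟩ := hX
  classical
  set S : Finset (Fin k) := Finset.univ.filter (fun i => x i ∈ Y) with hSdef
  have himg : Finset.image x S = Y := by
    ext v
    simp only [hSdef, Finset.mem_image, Finset.mem_filter, Finset.mem_univ, true_and]
    constructor
    · rintro ⟨i, hi, rfl⟩; exact hi
    · intro hv
      have hvX : v ∈ X := hYX hv
      rw [hXeq] at hvX
      simp only [Finset.mem_image, Finset.mem_univ, true_and] at hvX
      obtain ⟨i, rfl⟩ := hvX
      exact ⟨i, hv, rfl⟩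
  set m := S.card with hm
  let e := S.orderIsoOfFin hm.symm
  refine ⟨m, fun j => x (e j),
    fun j => if h : (j : ℕ) < m then C (Fin.castSucc (e ⟨j, h⟩)) else C (Fin.last k),
    ?_, ?_, ?_, ?_, ?_⟩
  · intro a b hab
    have : (e a : Fin k) = (e b : Fin k) := hinj hab
    exact e.injective (Subtype.ext this)
  · rw [show (Finset.image (fun j => x (e j)) Finset.univ)
        = Finset.image x (Finset.image (fun j => ((e j : Fin k))) Finset.univ) from
      (Finset.image_image).symm]
    have : Finset.image (fun j => ((e j : Fin k))) Finset.univ = S := by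
      ext a
      simp only [Finset.mem_image, Finset.mem_univ, true_and]
      constructor
      · rintro ⟨j, rfl⟩; exact (e j).2
      · intro ha; exact ⟨e.symm ⟨a, ha⟩, by simp⟩
    rw [this, himg]
  · intro i
    dsimp only
    split_ifs <;> exact hCF _
  · intro j
    have hcastval : ((Fin.castSucc j : Fin (m + 1)) : ℕ) < m := by
      simpa using j.isLt
    have hcast : (if h : ((Fin.castSucc j : Fin (m + 1)) : ℕ) < m then
          C (Fin.castSucc (e ⟨((Fin.castSucc j : Fin (m + 1)) : ℕ), h⟩))
        else C (Fin.last k)) = C (Fin.castSucc (e j)) := by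
      rw [dif_pos hcastval]
      have hj : (⟨((Fin.castSucc j : Fin (m + 1)) : ℕ), hcastval⟩ : Fin m) = j :=
        Fin.ext (by simp)
      rw [hj]
    dsimp only
    rw [hcast]
    refine (hmono (e j)).trans ?_
    by_cases h : ((Fin.succ j : Fin (m + 1)) : ℕ) < m
    · rw [dif_pos h]
      have hlt : (e j : Fin k) < (e ⟨((Fin.succ j : Fin (m + 1)) : ℕ), h⟩ : Fin k) := by
        have : j < (⟨((Fin.succ j : Fin (m + 1)) : ℕ), h⟩ : Fin m) := by
          simp [Fin.lt_def]
        exact e.strictMono this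
      refine chainMono C hmono _ _ ?_
      simp only [Fin.le_def, Fin.val_succ, Fin.coe_castSucc]
      exact hlt
    · rw [dif_neg h]
      exact chainMono C hmono _ _ (Fin.le_last _)
  · intro j
    have hcastval : ((Fin.castSucc j : Fin (m + 1)) : ℕ) < m := by
      simpa using j.isLt
    have hcast : (if h : ((Fin.castSucc j : Fin (m + 1)) : ℕ) < m then
          C (Fin.castSucc (e ⟨((Fin.castSucc j : Fin (m + 1)) : ℕ), h⟩))
        else C (Fin.last k)) = C (Fin.castSucc (e j)) := by
      rw [dif_pos hcastval]
      have hj : (⟨((Fin.castSucc j : Fin (m + 1)) : ℕ), hcastval⟩ : Fin m) = j :=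
        Fin.ext (by simp)
      rw [hj]
    constructor
    · dsimp only
      have hmem : x (e j) ∈ C (Fin.succ (e j)) := (hx (e j)).1
      by_cases h : ((Fin.succ j : Fin (m + 1)) : ℕ) < m
      · rw [dif_pos h]
        have hlt : (e j : Fin k) < (e ⟨((Fin.succ j : Fin (m + 1)) : ℕ), h⟩ : Fin k) := by
          have : j < (⟨((Fin.succ j : Fin (m + 1)) : ℕ), h⟩ : Fin m) := by
            simp [Fin.lt_def]
          exact e.strictMono this
        refine chainMono C hmono _ _ ?_ hmem
        simp only [Fin.le_def, Fin.val_succ, Fin.coe_castSucc]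
        exact hlt
      · rw [dif_neg h]
        exact chainMono C hmono _ _ (Fin.le_last _) hmem
    · dsimp only
      rw [hcast]
      exact (hx (e j)).2

lemma univ_mem_eps [Fintype V] (H : Set (Finset V)) (d : ℕ) :
    Finset.univ ∈ eps H d :=
  fun _ _ _ _ p hp => absurd (Finset.mem_univ p) hp

lemma empty_mem_eps (H : Set (Finset V)) (hS : IsSimplicialComplex H) (d : ℕ) :
    (∅ : Finset V) ∈ eps H d := by
  intro Y _ hsub _ p _
  have hY : Y = ∅ := Finset.subset_empty.mp hsub
  subst hY
  simpa using hS.1 p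

lemma inter_mem_eps {H : Set (Finset V)} {d : ℕ} {A B : Finset V}
    (hA : A ∈ eps H d) (hB : B ∈ eps H d) : A ∩ B ∈ eps H d := by
  intro Y hY hsub hYd p hp
  by_cases hpA : p ∈ A
  · have hpB : p ∉ B := fun hpB => hp (Finset.mem_inter.mpr ⟨hpA, hpB⟩)
    exact hB Y hY (hsub.trans Finset.inter_subset_right) hYd p hpB
  · exact hA Y hY (hsub.trans Finset.inter_subset_left) hYd p hpA

/-- Every member of `eps H d` is a flat of `Tr (eps H d)`. -/
lemma eps_isFlat [Fintype V] {H : Set (Finset V)} {d : ℕ} {F : Finset V}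
    (hF : F ∈ eps H d) : IsFlat (Tr (eps H d)) F := by
  intro I hI hIF p hpF
  obtain ⟨k, x, C, hinj, hIeq, hCE, hmono, hx⟩ := hI
  have hxF : ∀ i, x i ∈ F := by
    intro i
    apply hIF
    rw [hIeq]
    exact Finset.mem_image.mpr ⟨i, Finset.mem_univ i, rfl⟩
  refine ⟨k + 1, Fin.snoc x p, Fin.snoc (fun i => C i ∩ F) Finset.univ, ?_, ?_, ?_, ?_, ?_⟩
  · intro a b hab
    induction a using Fin.lastCases with
    | last =>
      induction b using Fin.lastCases with
      | last => rfl
      | cast b =>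
        rw [Fin.snoc_last, Fin.snoc_castSucc] at hab
        exact absurd (hab ▸ hxF b) hpF
    | cast a =>
      induction b using Fin.lastCases with
      | last =>
        rw [Fin.snoc_last, Fin.snoc_castSucc] at hab
        exact absurd (hab ▸ hpF) (by simp [hxF a])
      | cast b =>
        rw [Fin.snoc_castSucc, Fin.snoc_castSucc] at hab
        rw [hinj hab]
  · ext v
    simp only [Finset.mem_insert, Finset.mem_image, Finset.mem_univ, true_and]
    constructor
    · rintro (rfl | hv)
      · exact ⟨Fin.last k, Fin.snoc_last _ _⟩
      · rw [hIeq] at hv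
        simp only [Finset.mem_image, Finset.mem_univ, true_and] at hv
        obtain ⟨i, rfl⟩ := hv
        exact ⟨i.castSucc, Fin.snoc_castSucc _ _ _⟩
    · rintro ⟨i, hi⟩
      induction i using Fin.lastCases with
      | last => rw [Fin.snoc_last] at hi; exact Or.inl hi.symm
      | cast i =>
        rw [Fin.snoc_castSucc] at hi
        refine Or.inr ?_
        rw [hIeq]
        exact hi ▸ Finset.mem_image.mpr ⟨i, Finset.mem_univ i, rfl⟩
  · intro i
    induction i using Fin.lastCases with
    | last => rw [Fin.snoc_last]; exact univ_mem_eps H d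
    | cast i => rw [Fin.snoc_castSucc]; exact inter_mem_eps (hCE i) hF
  · intro i
    induction i using Fin.lastCases with
    | last =>
      rw [Fin.succ_last, Fin.snoc_last]
      exact Finset.subset_univ _
    | cast i =>
      rw [Fin.succ_castSucc, Fin.snoc_castSucc, Fin.snoc_castSucc]
      exact Finset.inter_subset_inter (hmono i) (Finset.Subset.refl F)
  · intro i
    induction i using Fin.lastCases with
    | last =>
      rw [Fin.succ_last, Fin.snoc_last, Fin.snoc_last, Fin.snoc_castSucc]
      exact ⟨Finset.mem_univ p, fun hc => hpF (Finset.mem_inter.mp hc).2⟩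
    | cast i =>
      rw [Fin.snoc_castSucc,
        show (Fin.castSucc i).succ = (i.succ).castSucc from Fin.succ_castSucc _,
        Fin.snoc_castSucc,
        show (Fin.castSucc i).castSucc = (i.castSucc).castSucc from rfl,
        Fin.snoc_castSucc]
      exact ⟨Finset.mem_inter.mpr ⟨(hx i).1, hxF i⟩,
        fun hc => (hx i).2 (Finset.mem_inter.mp hc).1⟩

/-- A transversal for chains in `eps H d` of cardinality at most `d + 1` is a face. -/
lemma tr_eps_mem [Fintype V] {H : Set (Finset V)} {d : ℕ}
    (hemp : (∅ : Finset V) ∈ H) {X : Finset V}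
    (hX : X ∈ Tr (eps H d)) (hcard : X.card ≤ d + 1) : X ∈ H := by
  obtain ⟨k, x, C, hinj, hXeq, hCE, hmono, hx⟩ := hX
  have hkcard : X.card = k := by
    rw [hXeq, Finset.card_image_of_injective _ hinj, Finset.card_univ, Fintype.card_fin]
  have key : ∀ j, j ≤ k →
      (Finset.univ.filter fun i : Fin k => (i : ℕ) < j).image x ∈ H := by
    intro j
    induction j with
    | zero =>
      intro _
      simpa using hemp
    | succ n ih =>
      intro hj
      have hn : n < k := hj
      have hstep : (Finset.univ.filter fun i : Fin k => (i : ℕ) < n + 1)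
          = insert ⟨n, hn⟩ (Finset.univ.filter fun i : Fin k => (i : ℕ) < n) := by
        ext i
        simp only [Finset.mem_filter, Finset.mem_univ, true_and, Finset.mem_insert,
          Fin.ext_iff]
        omega
      rw [hstep, Finset.image_insert]
      set P := (Finset.univ.filter fun i : Fin k => (i : ℕ) < n).image x with hP
      have hPH : P ∈ H := ih (Nat.le_of_lt hn)
      have hPC : P ⊆ C (Fin.castSucc ⟨n, hn⟩) := by
        intro v hv
        rw [hP] at hv
        simp only [Finset.mem_image, Finset.mem_filter, Finset.mem_univ, true_and] at hv
        obtain ⟨i, hi, rfl⟩ := hv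
        refine chainMono C hmono _ _ ?_ ((hx i).1)
        simp only [Fin.le_def, Fin.val_succ, Fin.coe_castSucc]
        omega
      have hmemX : x ⟨n, hn⟩ ∈ X := by
        rw [hXeq]; exact Finset.mem_image.mpr ⟨⟨n, hn⟩, Finset.mem_univ _, rfl⟩
      have hPd : P.card ≤ d := by
        have hsub : P ⊆ X.erase (x ⟨n, hn⟩) := by
          intro v hv
          rw [hP] at hv
          simp only [Finset.mem_image, Finset.mem_filter, Finset.mem_univ, true_and] at hv
          obtain ⟨i, hi, rfl⟩ := hv
          refine Finset.mem_erase.mpr ⟨fun he => ?_, ?_⟩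
          · have : i = ⟨n, hn⟩ := hinj he
            rw [this] at hi
            exact absurd hi (by simp)
          · rw [hXeq]; exact Finset.mem_image.mpr ⟨i, Finset.mem_univ _, rfl⟩
        have h1 : P.card ≤ (X.erase (x ⟨n, hn⟩)).card := Finset.card_le_card hsub
        rw [Finset.card_erase_of_mem hmemX] at h1
        omega
      exact hCE (Fin.castSucc ⟨n, hn⟩) P hPH hPC hPd (x ⟨n, hn⟩) (hx ⟨n, hn⟩).2
  have hall : (Finset.univ.filter fun i : Fin k => (i : ℕ) < k) = Finset.univ := by
    ext i; simp [i.isLt]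
  have := key k le_rfl
  rw [hall, ← hXeq] at this
  exact this

/-- Part (B): if `H` equals the truncation, the flats of `Tr (eps H d)` are exactly
`eps H d`. -/
lemma partB [Fintype V] {H : Set (Finset V)} {d : ℕ}
    (h : H = trunc (Tr (eps H d)) (d + 1)) :
    {F : Finset V | IsFlat (Tr (eps H d)) F} = eps H d := by
  ext F
  constructor
  · intro hF Y hY hYF hYd p hpF
    have hYT : Y ∈ Tr (eps H d) := by
      rw [h] at hY; exact hY.1
    have hins : insert p Y ∈ Tr (eps H d) := hF Y hYT hYF p hpF
    rw [h]
    exact ⟨hins, (Finset.card_insert_le p Y).trans (by omega)⟩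
  · exact eps_isFlat

end Aux

theorem stmt_3 [Fintype V] [DecidableEq V] [Nonempty V]
    (H : Set (Finset V)) (hS : IsSimplicialComplex H) (d : ℕ) (hd : HasDim H d) :
    ((∃ H' : Set (Finset V), IsSimplicialComplex H' ∧ BooleanRepresentable H' ∧
        H = trunc H' (d + 1)) ↔ H = trunc (Tr (eps H d)) (d + 1)) ∧
      (H = trunc (Tr (eps H d)) (d + 1) →
        {F : Finset V | IsFlat (Tr (eps H d)) F} = eps H d) := by
  have hemp : (∅ : Finset V) ∈ H := by
    obtain ⟨X, hX, -⟩ := hd.1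
    exact hS.2 X hX ∅ (Finset.empty_subset X)
  refine ⟨⟨?_, ?_⟩, fun h => partB h⟩
  · rintro ⟨H', hSC', hBR', hH⟩
    apply Set.Subset.antisymm
    · intro X hX
      refine ⟨?_, hd.2 X hX⟩
      have hXH' : X ∈ H' := by
        rw [hH] at hX; exact hX.1
      rw [hBR'] at hXH'
      refine tr_mono ?_ hXH'
      intro F hF Y hY hYF hYd p hp
      rw [hH] at hY
      have hins : insert p Y ∈ H' := hF Y hY.1 hYF p hp
      rw [hH]
      exact ⟨hins, (Finset.card_insert_le p Y).trans (by omega)⟩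
    · rintro X ⟨hX, hcard⟩
      exact tr_eps_mem hemp hX hcard
  · intro h
    refine ⟨Tr (eps H d), ⟨?_, ?_⟩, ?_, h⟩
    · intro v
      refine ⟨1, fun _ => v, fun i => if i = 0 then ∅ else Finset.univ, ?_, ?_, ?_, ?_, ?_⟩
      · intro a b _; exact Subsingleton.elim a b
      · simp [Finset.image_const]
      · intro i
        dsimp only
        by_cases hi : i = 0
        · rw [if_pos hi]; exact empty_mem_eps H hS d
        · rw [if_neg hi]; exact univ_mem_eps H d
      · intro i
        have hi : i = 0 := Subsingleton.elim i 0
        subst hi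
        simp
      · intro i
        have hi : i = 0 := Subsingleton.elim i 0
        subst hi
        simp
    · intro X hX Y hY
      exact tr_downward hX hY
    · show Tr (eps H d) = Tr {F : Finset V | IsFlat (Tr (eps H d)) F}
      rw [partB h]
end

section
/- Let S = (V,H) be a finite paving simplicial complex of dimension d (i.e., every subset of V of cardinality d is a face and dim S = d). Then L(S^ε) = ε(S), where S^ε = (V, Tr(ε(S))). -/
open scoped Classical

variable {V : Type*}

section MyAux

variable [Fintype V] [DecidableEq V]

/-- Any set of cardinality at most `d` is a face of a paving complex of dim `d`. -/
lemma my_card_le_mem (H : Set (Finset V)) (hS : IsSimplicialComplex H) {d : ℕ}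
    (hp : PavingDim H d) {X : Finset V} (hX : X.card ≤ d) : X ∈ H := by
  obtain ⟨X0, hX0, hX0c⟩ := hp.2.1
  have hV : d ≤ (Finset.univ : Finset V).card := by
    have := Finset.card_le_card (Finset.subset_univ X0); omega
  obtain ⟨Z, hXZ, _, hZc⟩ :=
    Finset.exists_subsuperset_card_eq (Finset.subset_univ X) hX hV
  exact hS.2 Z (hp.1 Z hZc) X hXZ

lemma my_small_mem_eps (H : Set (Finset V)) (hS : IsSimplicialComplex H) {d : ℕ}
    (hp : PavingDim H d) {X : Finset V} (hX : X.card < d) : X ∈ eps H d := by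
  intro Y _ hYX _ p _
  refine my_card_le_mem H hS hp ?_
  have h1 : Y.card ≤ X.card := Finset.card_le_card hYX
  have h2 : (insert p Y).card ≤ Y.card + 1 := Finset.card_insert_le _ _
  omega

lemma my_univ_mem_eps (H : Set (Finset V)) (d : ℕ) :
    (Finset.univ : Finset V) ∈ eps H d := by
  intro Y _ _ _ p hp
  exact absurd (Finset.mem_univ p) hp

lemma my_eps_inter (H : Set (Finset V)) (d : ℕ) {A B : Finset V}
    (hA : A ∈ eps H d) (hB : B ∈ eps H d) : A ∩ B ∈ eps H d := by
  intro Y hY hYAB hYc p hp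
  rw [Finset.mem_inter] at hp
  push_neg at hp
  by_cases hpA : p ∈ A
  · exact hB Y hY (hYAB.trans Finset.inter_subset_right) hYc p (hp hpA)
  · exact hA Y hY (hYAB.trans Finset.inter_subset_left) hYc p hpA

lemma my_chain_mono {k : ℕ} (C : Fin (k + 1) → Finset V)
    (h : ∀ i : Fin k, C i.castSucc ⊆ C i.succ) : Monotone C :=
  Fin.monotone_iff_le_succ.2 fun i => h i

/-- Extending a transversal by one point outside a member of the family. -/
lemma my_tr_extend (F : Set (Finset V))
    (hinter : ∀ A ∈ F, ∀ B ∈ F, A ∩ B ∈ F) (huniv : (Finset.univ : Finset V) ∈ F)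
    {X I : Finset V} {p : V} (hX : X ∈ F) (hI : I ∈ Tr F) (hIX : I ⊆ X)
    (hp : p ∉ X) : insert p I ∈ Tr F := by
  obtain ⟨k, x, C, hxinj, hIimg, hCF, hCchain, hx⟩ := hI
  have hxmem : ∀ i, x i ∈ I := fun i => by
    rw [hIimg]; exact Finset.mem_image.2 ⟨i, Finset.mem_univ _, rfl⟩
  have hpx : ∀ i, p ≠ x i := fun i h => hp (hIX (h ▸ hxmem i))
  refine ⟨k + 1, Fin.snoc x p, Fin.snoc (fun i => C i ∩ X) Finset.univ, ?_, ?_, ?_, ?_, ?_⟩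
  · intro a b hab
    induction a using Fin.lastCases with
    | last =>
        induction b using Fin.lastCases with
        | last => rfl
        | cast j =>
            rw [Fin.snoc_last, Fin.snoc_castSucc] at hab
            exact absurd hab (hpx j)
    | cast i =>
        induction b using Fin.lastCases with
        | last =>
            rw [Fin.snoc_last, Fin.snoc_castSucc] at hab
            exact absurd hab.symm (hpx i)
        | cast j =>
            rw [Fin.snoc_castSucc, Fin.snoc_castSucc] at hab
            exact congrArg Fin.castSucc (hxinj hab)
  · ext v
    simp only [Finset.mem_insert, Finset.mem_image, Finset.mem_univ, true_and, hIimg]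
    constructor
    · rintro (rfl | ⟨i, rfl⟩)
      · exact ⟨Fin.last k, by rw [Fin.snoc_last]⟩
      · exact ⟨i.castSucc, by rw [Fin.snoc_castSucc]⟩
    · rintro ⟨i, rfl⟩
      induction i using Fin.lastCases with
      | last => left; rw [Fin.snoc_last]
      | cast j => right; exact ⟨j, by rw [Fin.snoc_castSucc]⟩
  · intro i
    induction i using Fin.lastCases with
    | last => rw [Fin.snoc_last]; exact huniv
    | cast j => rw [Fin.snoc_castSucc]; exact hinter _ (hCF j) _ hX
  · intro i
    induction i using Fin.lastCases with
    | last =>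
        rw [Fin.succ_last, Fin.snoc_last]
        exact Finset.subset_univ _
    | cast j =>
        rw [Fin.succ_castSucc, Fin.snoc_castSucc, Fin.snoc_castSucc]
        exact Finset.inter_subset_inter (hCchain j) le_rfl
  · intro i
    induction i using Fin.lastCases with
    | last =>
        constructor
        · rw [Fin.succ_last, Fin.snoc_last, Fin.snoc_last]
          exact Finset.mem_univ _
        · rw [Fin.snoc_last, Fin.snoc_castSucc]
          intro hmem
          exact hp (Finset.mem_inter.1 hmem).2
    | cast j =>
        constructor
        · rw [Fin.succ_castSucc, Fin.snoc_castSucc, Fin.snoc_castSucc]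
          exact Finset.mem_inter.2 ⟨(hx j).1, hIX (hxmem j)⟩
        · rw [Fin.snoc_castSucc, Fin.snoc_castSucc]
          intro hmem
          exact (hx j).2 (Finset.mem_inter.1 hmem).1

lemma my_empty_tr (F : Set (Finset V)) (huniv : (Finset.univ : Finset V) ∈ F) :
    (∅ : Finset V) ∈ Tr F := by
  refine ⟨0, Fin.elim0, fun _ => Finset.univ, ?_, ?_, fun _ => huniv, ?_, ?_⟩
  · intro a; exact a.elim0
  · simp
  · intro i; exact i.elim0
  · intro i; exact i.elim0

lemma my_small_tr (H : Set (Finset V)) (hS : IsSimplicialComplex H) {d : ℕ}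
    (hp : PavingDim H d) {Y : Finset V} (hY : Y.card ≤ d) : Y ∈ Tr (eps H d) := by
  induction Y using Finset.induction_on with
  | empty => exact my_empty_tr _ (my_univ_mem_eps H d)
  | @insert a Y ha ih =>
      rw [Finset.card_insert_of_notMem ha] at hY
      exact my_tr_extend (eps H d) (fun A hA B hB => my_eps_inter H d hA hB)
        (my_univ_mem_eps H d) (my_small_mem_eps H hS hp (by omega))
        (ih (by omega)) (Finset.Subset.refl Y) ha

lemma my_big_tr_mem (H : Set (Finset V)) (hS : IsSimplicialComplex H) {d : ℕ}
    (hp : PavingDim H d) {X : Finset V} (hX : X ∈ Tr (eps H d))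
    (hXc : X.card = d + 1) : X ∈ H := by
  obtain ⟨k, x, C, hxinj, hXimg, hCF, hCchain, hx⟩ := hX
  have hcard : X.card = k := by
    rw [hXimg, Finset.card_image_of_injective _ hxinj, Finset.card_univ, Fintype.card_fin]
  have hk : k = d + 1 := by omega
  have hd : d < k := by omega
  set j : Fin k := ⟨d, hd⟩ with hj
  have hxjX : x j ∈ X := by
    rw [hXimg]; exact Finset.mem_image.2 ⟨j, Finset.mem_univ _, rfl⟩
  set Y : Finset V := X.erase (x j) with hYdef
  have hYc : Y.card = d := by
    rw [hYdef, Finset.card_erase_of_mem hxjX]; omega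
  have hYC : Y ⊆ C ⟨d, by omega⟩ := by
    intro v hv
    obtain ⟨hne, hvX⟩ := Finset.mem_erase.1 hv
    rw [hXimg] at hvX
    obtain ⟨i, _, rfl⟩ := Finset.mem_image.1 hvX
    have hij : i ≠ j := fun h => hne (by rw [h])
    have hilt : (i : ℕ) < d := by
      have := i.isLt
      have : (i : ℕ) ≠ d := fun h => hij (Fin.ext h)
      omega
    have h1 : x i ∈ C i.succ := (hx i).1
    have h2 : C i.succ ⊆ C ⟨d, by omega⟩ :=
      my_chain_mono C hCchain (by
        rw [Fin.le_def]; simpa using hilt)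
    exact h2 h1
  have hxjC : x j ∉ C ⟨d, by omega⟩ := by
    have := (hx j).2
    simpa [Fin.castSucc, Fin.castAdd, Fin.castLE] using this
  have hins : insert (x j) Y ∈ H :=
    hCF ⟨d, by omega⟩ Y (my_card_le_mem H hS hp (le_of_eq hYc)) hYC
      (le_of_eq hYc) (x j) hxjC
  rwa [hYdef, Finset.insert_erase hxjX] at hins

end MyAux

theorem stmt_4 [Fintype V] [DecidableEq V] [Nonempty V]
    (H : Set (Finset V)) (hS : IsSimplicialComplex H) (d : ℕ) (hp : PavingDim H d) :
    {F : Finset V | IsFlat (Tr (eps H d)) F} = eps H d := by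
  ext F
  simp only [Set.mem_setOf_eq]
  constructor
  · -- flats of Tr(eps) are in eps
    intro hflat Y hYH hYF hYc p hpF
    by_cases hYd : Y.card < d
    · refine my_card_le_mem H hS hp ?_
      have := Finset.card_insert_le p Y
      omega
    · have hYcd : Y.card = d := by omega
      have hYtr : Y ∈ Tr (eps H d) := my_small_tr H hS hp (le_of_eq hYcd)
      have hins : insert p Y ∈ Tr (eps H d) := hflat Y hYtr hYF p hpF
      have hpY : p ∉ Y := fun h => hpF (hYF h)
      refine my_big_tr_mem H hS hp hins ?_
      rw [Finset.card_insert_of_notMem hpY, hYcd]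
  · -- members of eps are flats of Tr(eps)
    intro hF I hI hIF p hpF
    exact my_tr_extend (eps H d) (fun A hA B hB => my_eps_inter H d hA hB)
      (my_univ_mem_eps H d) hF hI hIF hpF
end

section
/- Let V be a finite nonempty set and let F ⊆ P_2(V) ∪ P_3(V) be a collection of pairwise disjoint sets of size 2 or 3. Let H be the set of all X ⊆ V with |X| ≤ 3 containing no element of F. Then (V,H) is a matroid. -/
open scoped Classical

variable {V : Type*}

theorem stmt_6 [Fintype V] [DecidableEq V] [Nonempty V]
    (F : Set (Finset V)) (hcard : ∀ B ∈ F, B.card = 2 ∨ B.card = 3)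
    (hdisj : ∀ B ∈ F, ∀ B' ∈ F, B ≠ B' → Disjoint B B') :
    IsMatroid {X : Finset V | X.card ≤ 3 ∧ ∀ B ∈ F, ¬ B ⊆ X} := by
  constructor
  · constructor
    · intro v
      refine ⟨by simp, ?_⟩
      intro B hB hsub
      have h2 : 2 ≤ B.card := by rcases hcard B hB with h | h <;> omega
      have := Finset.card_le_card hsub
      simp at this
      omega
    · intro X hX Y hYX
      exact ⟨le_trans (Finset.card_le_card hYX) hX.1,
        fun B hB hs => hX.2 B hB (hs.trans hYX)⟩
  · intro I hI J hJ hIJ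
    -- find i ∈ I \ J such that no block is contained in insert i J
    have hkey : ∀ i ∈ I \ J, (∃ B ∈ F, B ⊆ insert i J) →
        ∃ v ∈ J \ I, ∃ B ∈ F, i ∈ B ∧ v ∈ B ∧ B ⊆ insert i J := by
      intro i hi ⟨B, hB, hBsub⟩
      simp only [Finset.mem_sdiff] at hi
      have hiB : i ∈ B := by
        by_contra hiB
        exact hJ.2 B hB (fun x hx => by
          rcases Finset.mem_insert.mp (hBsub hx) with h | h
          · exact absurd (h ▸ hx) hiB
          · exact h)
      have : ¬ B ⊆ I := hI.2 B hB
      obtain ⟨v, hvB, hvI⟩ := Finset.not_subset.mp this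
      have hvJ : v ∈ J := by
        rcases Finset.mem_insert.mp (hBsub hvB) with h | h
        · exact absurd (h ▸ hi.1) hvI
        · exact h
      exact ⟨v, Finset.mem_sdiff.mpr ⟨hvJ, hvI⟩, B, hB, hiB, hvB, hBsub⟩
    have hlt : (J \ I).card < (I \ J).card := by
      have h1 := Finset.card_sdiff_add_card_inter I J
      have h2 := Finset.card_sdiff_add_card_inter J I
      rw [Finset.inter_comm] at h2
      omega
    have hex : ∃ i ∈ I \ J, ¬ ∃ B ∈ F, B ⊆ insert i J := by
      by_contra hc
      push_neg at hc
      set f : V → V := fun i =>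
        if h : ∃ v ∈ J \ I, ∃ B ∈ F, i ∈ B ∧ v ∈ B ∧ B ⊆ insert i J then h.choose
        else i with hf
      have hspec : ∀ i ∈ I \ J, f i ∈ J \ I ∧
          ∃ B ∈ F, i ∈ B ∧ f i ∈ B ∧ B ⊆ insert i J := by
        intro i hi
        have h := hkey i hi (hc i hi)
        rw [hf]
        simp only [dif_pos h]
        exact ⟨h.choose_spec.1, h.choose_spec.2⟩
      have hinj : Set.InjOn f ↑(I \ J) := by
        intro i1 h1 i2 h2 heq
        obtain ⟨hv1, B1, hB1, hi1, hv1B, hs1⟩ := hspec i1 (Finset.mem_coe.mp h1)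
        obtain ⟨hv2, B2, hB2, hi2, hv2B, hs2⟩ := hspec i2 (Finset.mem_coe.mp h2)
        have hBeq : B1 = B2 := by
          by_contra hne
          exact Finset.disjoint_left.mp (hdisj B1 hB1 B2 hB2 hne) hv1B (heq ▸ hv2B)
        have : i2 ∈ insert i1 J := hs1 (hBeq ▸ hi2)
        rcases Finset.mem_insert.mp this with h | h
        · exact h.symm
        · exact absurd h (Finset.mem_sdiff.mp (Finset.mem_coe.mp h2)).2
      have := Finset.card_le_card_of_injOn f (fun i hi => (hspec i hi).1) hinj
      omega
    obtain ⟨i, hi, hgood⟩ := hex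
    have hi' := Finset.mem_sdiff.mp hi
    refine ⟨i, hi'.1, hi'.2, ?_, ?_⟩
    · have := Finset.card_insert_le i J
      have := hI.1
      omega
    · intro B hB hsub
      exact hgood ⟨B, hB, hsub⟩
end

section
/- Let V = {1,...,6} and H = P_{≤3}(V) \ {135, 235, 146, 246, 346, 456}. Then S = (V,H) is a paving TBRSC of dimension 2 but is not boolean representable. -/
open scoped Classical

variable {V : Type*}

/-- The faces: all sets of size at most 3 except the six triangles
135, 235, 146, 246, 346, 456 (with vertices relabelled `1,…,6 ↦ 0,…,5`). -/
def H8 : Set (Finset (Fin 6)) :=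
  {X | X.card ≤ 3 ∧ X ∉ ({{0, 2, 4}, {1, 2, 4}, {0, 3, 5}, {1, 3, 5}, {2, 3, 5},
    {3, 4, 5}} : Set (Finset (Fin 6)))}

/- ### Auxiliary definitions and lemmas -/

def badF : Finset (Finset (Fin 6)) :=
  {{0,2,4},{1,2,4},{0,3,5},{1,3,5},{2,3,5},{3,4,5}}

def extraF : Finset (Finset (Fin 6)) :=
  {{0,1,2,3},{0,1,2,5},{0,1,3,4},{0,1,4,5}}

/-- A decidable copy of `H8`. -/
def H8s : Set (Finset (Fin 6)) := {X | X.card ≤ 3 ∧ X ∉ badF}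

/-- The boolean representable complex whose 3-truncation is `H8`. -/
def Hp : Set (Finset (Fin 6)) := {X | (X.card ≤ 3 ∧ X ∉ badF) ∨ X ∈ extraF}

instance (X : Finset (Fin 6)) : Decidable (X ∈ H8s) :=
  decidable_of_iff (X.card ≤ 3 ∧ X ∉ badF) Iff.rfl

instance (X : Finset (Fin 6)) : Decidable (X ∈ Hp) :=
  decidable_of_iff ((X.card ≤ 3 ∧ X ∉ badF) ∨ X ∈ extraF) Iff.rfl

instance (F : Finset (Fin 6)) : Decidable (IsFlat Hp F) :=
  decidable_of_iff
    (∀ I : Finset (Fin 6), I ∈ Hp → I ⊆ F → ∀ p : Fin 6, p ∉ F → insert p I ∈ Hp) Iff.rfl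

instance (F : Finset (Fin 6)) : Decidable (IsFlat H8s F) :=
  decidable_of_iff
    (∀ I : Finset (Fin 6), I ∈ H8s → I ⊆ F → ∀ p : Fin 6, p ∉ F → insert p I ∈ H8s) Iff.rfl

/-- The flats of `Hp`. -/
def lflats : Finset (Finset (Fin 6)) :=
  {∅,{0},{1},{2},{3},{4},{5},{0,1},{0,1,2,4},Finset.univ}

lemma mem_H8 (X : Finset (Fin 6)) : X ∈ H8 ↔ X ∈ H8s := by
  simp only [H8, H8s, Set.mem_setOf_eq, Set.mem_insert_iff, Set.mem_singleton_iff, badF,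
    Finset.mem_insert, Finset.mem_singleton]

lemma H8_eq : H8 = H8s := Set.ext mem_H8

set_option maxRecDepth 100000 in
lemma flats_sub : ∀ F ∈ lflats, IsFlat Hp F := by decide

set_option maxRecDepth 100000 in
lemma flatcls : ∀ F : Finset (Fin 6), IsFlat Hp F → F ∈ lflats := by decide

set_option maxRecDepth 100000 in
lemma flat8pin : ∀ F : Finset (Fin 6), IsFlat H8s F → ∀ a b : Fin 6, a ≠ b →
    a ∈ ({0,3,4} : Finset (Fin 6)) → b ∈ ({0,3,4} : Finset (Fin 6)) →
    a ∈ F → b ∈ F → F = Finset.univ := by decide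

set_option maxRecDepth 100000 in
lemma small_mem : ∀ X : Finset (Fin 6), X.card ≤ 2 → X ∈ Hp := by decide

set_option maxRecDepth 100000 in
lemma k3lemma : ∀ F ∈ lflats, ∀ a b c : Fin 6, a ≠ b → a ∈ F → b ∈ F → c ∉ F →
    ({a,b,c} : Finset (Fin 6)) ∈ Hp := by decide

set_option maxRecDepth 100000 in
lemma pin3 : ∀ F ∈ lflats, ∀ a b c d : Fin 6, a ≠ b → a ≠ c → b ≠ c →
    a ∈ F → b ∈ F → c ∈ F → d ∉ F → F = ({0,1,2,4} : Finset (Fin 6)) := by decide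

set_option maxRecDepth 100000 in
lemma pin2 : ∀ F ∈ lflats, ∀ a b c : Fin 6, a ≠ b → a ∈ F → b ∈ F → c ∉ F →
    F = ({0,1} : Finset (Fin 6)) ∨ F = ({0,1,2,4} : Finset (Fin 6)) := by decide

def hpF : Finset (Finset (Fin 6)) :=
  {(∅ : Finset (Fin 6)),({0} : Finset (Fin 6)),({1} : Finset (Fin 6)),({2} : Finset (Fin 6)),({3} : Finset (Fin 6)),({4} : Finset (Fin 6)),({5} : Finset (Fin 6)),({0,1} : Finset (Fin 6)),({0,2} : Finset (Fin 6)),({0,3} : Finset (Fin 6)),({0,4} : Finset (Fin 6)),({0,5} : Finset (Fin 6)),({1,2} : Finset (Fin 6)),({1,3} : Finset (Fin 6)),({1,4} : Finset (Fin 6)),({1,5} : Finset (Fin 6)),({2,3} : Finset (Fin 6)),({2,4} : Finset (Fin 6)),({2,5} : Finset (Fin 6)),({3,4} : Finset (Fin 6)),({3,5} : Finset (Fin 6)),({4,5} : Finset (Fin 6)),({0,1,2} : Finset (Fin 6)),({0,1,3} : Finset (Fin 6)),({0,1,4} : Finset (Fin 6)),({0,1,5} : Finset (Fin 6)),({0,2,3}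 : Finset (Fin 6)),({0,2,5} : Finset (Fin 6)),({0,3,4} : Finset (Fin 6)),({0,4,5} : Finset (Fin 6)),({1,2,3} : Finset (Fin 6)),({1,2,5} : Finset (Fin 6)),({1,3,4} : Finset (Fin 6)),({1,4,5} : Finset (Fin 6)),({2,3,4} : Finset (Fin 6)),({2,4,5} : Finset (Fin 6)),({0,1,2,3} : Finset (Fin 6)),({0,1,2,5} : Finset (Fin 6)),({0,1,3,4} : Finset (Fin 6)),({0,1,4,5} : Finset (Fin 6))}


set_option maxRecDepth 100000 in
lemma k4final : ∀ a b c d : Fin 6, a ∈ ({0,1} : Finset (Fin 6)) →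
    b ∈ ({0,1} : Finset (Fin 6)) → a ≠ b → c ∈ ({0,1,2,4} : Finset (Fin 6)) →
    c ∉ ({0,1} : Finset (Fin 6)) → d ∉ ({0,1,2,4} : Finset (Fin 6)) →
    ({a,b,c,d} : Finset (Fin 6)) ∈ hpF := by decide

lemma mkTr (X : Finset (Fin 6)) (k : ℕ) (x : Fin k → Fin 6) (C : Fin (k+1) → Finset (Fin 6))
    (h0 : X = Finset.image x Finset.univ) (h1 : Function.Injective x)
    (h2 : ∀ i, C i ∈ lflats) (h3 : ∀ i : Fin k, C i.castSucc ⊆ C i.succ)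
    (h4 : ∀ i : Fin k, x i ∈ C i.succ ∧ x i ∉ C i.castSucc) :
    X ∈ Tr {F | IsFlat Hp F} :=
  ⟨k, x, C, h1, h0, fun i => flats_sub _ (h2 i), h3, h4⟩

set_option maxRecDepth 100000 in
lemma memHp_iff : ∀ X : Finset (Fin 6), X ∈ Hp ↔ X ∈ hpF := by decide

lemma image3 (x : Fin 3 → Fin 6) : Finset.image x Finset.univ = {x 0, x 1, x 2} := by
  rw [show (Finset.univ : Finset (Fin 3)) = {0,1,2} by rfl]
  simp [Finset.image_insert]

lemma image4 (x : Fin 4 → Fin 6) : Finset.image x Finset.univ = {x 0, x 1, x 2, x 3} := by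
  rw [show (Finset.univ : Finset (Fin 4)) = {0,1,2,3} by rfl]
  simp [Finset.image_insert]

lemma simpl_Hp : IsSimplicialComplex Hp := by
  constructor
  · decide
  · decide

lemma trunc_Hp : H8 = trunc Hp 3 := by
  ext X
  rw [mem_H8]
  constructor
  · rintro ⟨hc, hb⟩
    exact ⟨Or.inl ⟨hc, hb⟩, hc⟩
  · rintro ⟨hmem, hc⟩
    rcases hmem with ⟨h1, h2⟩ | h
    · exact ⟨hc, h2⟩
    · fin_cases h <;> exact absurd hc (by decide)

lemma BR_Hp : BooleanRepresentable Hp := by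
  apply Set.ext
  intro X
  constructor
  · -- forward: every face is a transversal
    intro hX
    have hX' : X ∈ hpF := (memHp_iff X).mp hX
    fin_cases hX'
    exact mkTr _ 0 ![] ![(∅ : Finset (Fin 6))] (by decide) (by decide) (by decide) (by decide) (by decide)
    exact mkTr _ 1 ![0] ![(∅ : Finset (Fin 6)),({0} : Finset (Fin 6))] (by decide) (by decide) (by decide) (by decide) (by decide)
    exact mkTr _ 1 ![1] ![(∅ : Finset (Fin 6)),({1} : Finset (Fin 6))] (by decide) (by decide) (by decide) (by decide) (by decide)
    exact mkTr _ 1 ![2] ![(∅ : Finset (Fin 6)),({2} : Finset (Fin 6))] (by decide) (by decide) (by decide) (by decide) (by decide)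
    exact mkTr _ 1 ![3] ![(∅ : Finset (Fin 6)),({3} : Finset (Fin 6))] (by decide) (by decide) (by decide) (by decide) (by decide)
    exact mkTr _ 1 ![4] ![(∅ : Finset (Fin 6)),({4} : Finset (Fin 6))] (by decide) (by decide) (by decide) (by decide) (by decide)
    exact mkTr _ 1 ![5] ![(∅ : Finset (Fin 6)),({5} : Finset (Fin 6))] (by decide) (by decide) (by decide) (by decide) (by decide)
    exact mkTr _ 2 ![0,1] ![(∅ : Finset (Fin 6)),({0} : Finset (Fin 6)),({0,1} : Finset (Fin 6))] (by decide) (by decide) (by decide) (by decide) (by decide)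
    exact mkTr _ 2 ![0,2] ![(∅ : Finset (Fin 6)),({0} : Finset (Fin 6)),({0,1,2,4} : Finset (Fin 6))] (by decide) (by decide) (by decide) (by decide) (by decide)
    exact mkTr _ 2 ![0,3] ![(∅ : Finset (Fin 6)),({0} : Finset (Fin 6)),({0,1,2,3,4,5} : Finset (Fin 6))] (by decide) (by decide) (by decide) (by decide) (by decide)
    exact mkTr _ 2 ![0,4] ![(∅ : Finset (Fin 6)),({0} : Finset (Fin 6)),({0,1,2,4} : Finset (Fin 6))] (by decide) (by decide) (by decide) (by decide) (by decide)
    exact mkTr _ 2 ![0,5] ![(∅ : Finset (Fin 6)),({0} : Finset (Fin 6)),({0,1,2,3,4,5} : Finset (Fin 6))] (by decide) (by decide) (by decide) (by decide) (by decide)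
    exact mkTr _ 2 ![1,2] ![(∅ : Finset (Fin 6)),({1} : Finset (Fin 6)),({0,1,2,4} : Finset (Fin 6))] (by decide) (by decide) (by decide) (by decide) (by decide)
    exact mkTr _ 2 ![1,3] ![(∅ : Finset (Fin 6)),({1} : Finset (Fin 6)),({0,1,2,3,4,5} : Finset (Fin 6))] (by decide) (by decide) (by decide) (by decide) (by decide)
    exact mkTr _ 2 ![1,4] ![(∅ : Finset (Fin 6)),({1} : Finset (Fin 6)),({0,1,2,4} : Finset (Fin 6))] (by decide) (by decide) (by decide) (by decide) (by decide)
    exact mkTr _ 2 ![1,5] ![(∅ : Finset (Fin 6)),({1} : Finset (Fin 6)),({0,1,2,3,4,5} : Finset (Fin 6))] (by decide) (by decide) (by decide) (by decide) (by decide)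
    exact mkTr _ 2 ![2,3] ![(∅ : Finset (Fin 6)),({2} : Finset (Fin 6)),({0,1,2,3,4,5} : Finset (Fin 6))] (by decide) (by decide) (by decide) (by decide) (by decide)
    exact mkTr _ 2 ![2,4] ![(∅ : Finset (Fin 6)),({2} : Finset (Fin 6)),({0,1,2,4} : Finset (Fin 6))] (by decide) (by decide) (by decide) (by decide) (by decide)
    exact mkTr _ 2 ![2,5] ![(∅ : Finset (Fin 6)),({2} : Finset (Fin 6)),({0,1,2,3,4,5} : Finset (Fin 6))] (by decide) (by decide) (by decide) (by decide) (by decide)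
    exact mkTr _ 2 ![3,4] ![(∅ : Finset (Fin 6)),({3} : Finset (Fin 6)),({0,1,2,3,4,5} : Finset (Fin 6))] (by decide) (by decide) (by decide) (by decide) (by decide)
    exact mkTr _ 2 ![3,5] ![(∅ : Finset (Fin 6)),({3} : Finset (Fin 6)),({0,1,2,3,4,5} : Finset (Fin 6))] (by decide) (by decide) (by decide) (by decide) (by decide)
    exact mkTr _ 2 ![4,5] ![(∅ : Finset (Fin 6)),({4} : Finset (Fin 6)),({0,1,2,3,4,5} : Finset (Fin 6))] (by decide) (by decide) (by decide) (by decide) (by decide)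
    exact mkTr _ 3 ![0,1,2] ![(∅ : Finset (Fin 6)),({0} : Finset (Fin 6)),({0,1} : Finset (Fin 6)),({0,1,2,4} : Finset (Fin 6))] (by decide) (by decide) (by decide) (by decide) (by decide)
    exact mkTr _ 3 ![0,1,3] ![(∅ : Finset (Fin 6)),({0} : Finset (Fin 6)),({0,1} : Finset (Fin 6)),({0,1,2,3,4,5} : Finset (Fin 6))] (by decide) (by decide) (by decide) (by decide) (by decide)
    exact mkTr _ 3 ![0,1,4] ![(∅ : Finset (Fin 6)),({0} : Finset (Fin 6)),({0,1} : Finset (Fin 6)),({0,1,2,4} : Finset (Fin 6))] (by decide) (by decide) (by decide) (by decide) (by decide)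
    exact mkTr _ 3 ![0,1,5] ![(∅ : Finset (Fin 6)),({0} : Finset (Fin 6)),({0,1} : Finset (Fin 6)),({0,1,2,3,4,5} : Finset (Fin 6))] (by decide) (by decide) (by decide) (by decide) (by decide)
    exact mkTr _ 3 ![0,2,3] ![(∅ : Finset (Fin 6)),({0} : Finset (Fin 6)),({0,1,2,4} : Finset (Fin 6)),({0,1,2,3,4,5} : Finset (Fin 6))] (by decide) (by decide) (by decide) (by decide) (by decide)
    exact mkTr _ 3 ![0,2,5] ![(∅ : Finset (Fin 6)),({0} : Finset (Fin 6)),({0,1,2,4} : Finset (Fin 6)),({0,1,2,3,4,5} : Finset (Fin 6))] (by decide) (by decide) (by decide) (by decide) (by decide)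
    exact mkTr _ 3 ![0,4,3] ![(∅ : Finset (Fin 6)),({0} : Finset (Fin 6)),({0,1,2,4} : Finset (Fin 6)),({0,1,2,3,4,5} : Finset (Fin 6))] (by decide) (by decide) (by decide) (by decide) (by decide)
    exact mkTr _ 3 ![0,4,5] ![(∅ : Finset (Fin 6)),({0} : Finset (Fin 6)),({0,1,2,4} : Finset (Fin 6)),({0,1,2,3,4,5} : Finset (Fin 6))] (by decide) (by decide) (by decide) (by decide) (by decide)
    exact mkTr _ 3 ![1,2,3] ![(∅ : Finset (Fin 6)),({1} : Finset (Fin 6)),({0,1,2,4} : Finset (Fin 6)),({0,1,2,3,4,5} : Finset (Fin 6))] (by decide) (by decide) (by decide) (by decide) (by decide)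
    exact mkTr _ 3 ![1,2,5] ![(∅ : Finset (Fin 6)),({1} : Finset (Fin 6)),({0,1,2,4} : Finset (Fin 6)),({0,1,2,3,4,5} : Finset (Fin 6))] (by decide) (by decide) (by decide) (by decide) (by decide)
    exact mkTr _ 3 ![1,4,3] ![(∅ : Finset (Fin 6)),({1} : Finset (Fin 6)),({0,1,2,4} : Finset (Fin 6)),({0,1,2,3,4,5} : Finset (Fin 6))] (by decide) (by decide) (by decide) (by decide) (by decide)
    exact mkTr _ 3 ![1,4,5] ![(∅ : Finset (Fin 6)),({1} : Finset (Fin 6)),({0,1,2,4} : Finset (Fin 6)),({0,1,2,3,4,5} : Finset (Fin 6))] (by decide) (by decide) (by decide) (by decide) (by decide)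
    exact mkTr _ 3 ![2,4,3] ![(∅ : Finset (Fin 6)),({2} : Finset (Fin 6)),({0,1,2,4} : Finset (Fin 6)),({0,1,2,3,4,5} : Finset (Fin 6))] (by decide) (by decide) (by decide) (by decide) (by decide)
    exact mkTr _ 3 ![2,4,5] ![(∅ : Finset (Fin 6)),({2} : Finset (Fin 6)),({0,1,2,4} : Finset (Fin 6)),({0,1,2,3,4,5} : Finset (Fin 6))] (by decide) (by decide) (by decide) (by decide) (by decide)
    exact mkTr _ 4 ![0,1,2,3] ![(∅ : Finset (Fin 6)),({0} : Finset (Fin 6)),({0,1} : Finset (Fin 6)),({0,1,2,4} : Finset (Fin 6)),({0,1,2,3,4,5} : Finset (Fin 6))] (by decide) (by decide) (by decide) (by decide) (by decide)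
    exact mkTr _ 4 ![0,1,2,5] ![(∅ : Finset (Fin 6)),({0} : Finset (Fin 6)),({0,1} : Finset (Fin 6)),({0,1,2,4} : Finset (Fin 6)),({0,1,2,3,4,5} : Finset (Fin 6))] (by decide) (by decide) (by decide) (by decide) (by decide)
    exact mkTr _ 4 ![0,1,4,3] ![(∅ : Finset (Fin 6)),({0} : Finset (Fin 6)),({0,1} : Finset (Fin 6)),({0,1,2,4} : Finset (Fin 6)),({0,1,2,3,4,5} : Finset (Fin 6))] (by decide) (by decide) (by decide) (by decide) (by decide)
    exact mkTr _ 4 ![0,1,4,5] ![(∅ : Finset (Fin 6)),({0} : Finset (Fin 6)),({0,1} : Finset (Fin 6)),({0,1,2,4} : Finset (Fin 6)),({0,1,2,3,4,5} : Finset (Fin 6))] (by decide) (by decide) (by decide) (by decide) (by decide)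
  · -- backward: every transversal is a face
    rintro ⟨k, x, C, hinj, himg, hfl, hmono, hmem⟩
    have hcls : ∀ i, C i ∈ lflats := fun i => flatcls _ (hfl i)
    have hk6 : k ≤ 6 := by
      have := Fintype.card_le_of_injective x hinj
      simpa using this
    have hk0 : 0 ≤ k := Nat.zero_le _
    interval_cases k
    · exact small_mem X (by rw [himg]; simp)
    · refine small_mem X ?_
      rw [himg]
      exact le_trans (Finset.card_image_le) (by simp)
    · refine small_mem X ?_
      rw [himg]
      exact le_trans (Finset.card_image_le) (by simp)
    · -- k = 3
      have d01 : x 0 ≠ x 1 := fun h => absurd (hinj h) (by decide)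
      have m0 : x 0 ∈ C 2 := hmono 1 (hmem 0).1
      have m1 : x 1 ∈ C 2 := (hmem 1).1
      have m2 : x 2 ∉ C 2 := (hmem 2).2
      rw [himg, image3]
      exact k3lemma (C 2) (hcls 2) _ _ _ d01 m0 m1 m2
    · -- k = 4
      have d01 : x 0 ≠ x 1 := fun h => absurd (hinj h) (by decide)
      have d02 : x 0 ≠ x 2 := fun h => absurd (hinj h) (by decide)
      have d12 : x 1 ≠ x 2 := fun h => absurd (hinj h) (by decide)
      have m0 : x 0 ∈ C 2 := hmono 1 (hmem 0).1
      have m1 : x 1 ∈ C 2 := (hmem 1).1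
      have m2 : x 2 ∉ C 2 := (hmem 2).2
      have m0' : x 0 ∈ C 3 := hmono 2 m0
      have m1' : x 1 ∈ C 3 := hmono 2 m1
      have m2' : x 2 ∈ C 3 := (hmem 2).1
      have m3 : x 3 ∉ C 3 := (hmem 3).2
      have m3' : x 3 ∈ C 4 := (hmem 3).1
      have e3 : C 3 = ({0,1,2,4} : Finset (Fin 6)) :=
        pin3 (C 3) (hcls 3) _ _ _ _ d01 d02 d12 m0' m1' m2' m3
      have e2 : C 2 = ({0,1} : Finset (Fin 6)) ∨ C 2 = ({0,1,2,4} : Finset (Fin 6)) :=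
        pin2 (C 2) (hcls 2) _ _ _ d01 m0 m1 m2
      rcases e2 with e2 | e2
      · rw [e2] at m0 m1 m2
        rw [e3] at m2' m3
        rw [himg, image4]
        exact (memHp_iff _).mpr (k4final _ _ _ _ m0 m1 d01 m2' m2 m3)
      · rw [e2] at m2
        rw [e3] at m2'
        exact absurd m2' m2
    · -- k = 5
      have d01 : x 0 ≠ x 1 := fun h => absurd (hinj h) (by decide)
      have d02 : x 0 ≠ x 2 := fun h => absurd (hinj h) (by decide)
      have d12 : x 1 ≠ x 2 := fun h => absurd (hinj h) (by decide)
      have m0 : x 0 ∈ C 3 := hmono 2 (hmono 1 (hmem 0).1)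
      have m1 : x 1 ∈ C 3 := hmono 2 (hmem 1).1
      have m2 : x 2 ∈ C 3 := (hmem 2).1
      have m3 : x 3 ∉ C 3 := (hmem 3).2
      have m0' : x 0 ∈ C 4 := hmono 3 m0
      have m1' : x 1 ∈ C 4 := hmono 3 m1
      have m2' : x 2 ∈ C 4 := hmono 3 m2
      have m3' : x 3 ∈ C 4 := (hmem 3).1
      have m4 : x 4 ∉ C 4 := (hmem 4).2
      have e3 : C 3 = ({0,1,2,4} : Finset (Fin 6)) :=
        pin3 (C 3) (hcls 3) _ _ _ _ d01 d02 d12 m0 m1 m2 m3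
      have e4 : C 4 = ({0,1,2,4} : Finset (Fin 6)) :=
        pin3 (C 4) (hcls 4) _ _ _ _ d01 d02 d12 m0' m1' m2' m4
      rw [e4] at m3'
      rw [e3] at m3
      exact absurd m3' m3
    · -- k = 6
      have d01 : x 0 ≠ x 1 := fun h => absurd (hinj h) (by decide)
      have d02 : x 0 ≠ x 2 := fun h => absurd (hinj h) (by decide)
      have d12 : x 1 ≠ x 2 := fun h => absurd (hinj h) (by decide)
      have m0 : x 0 ∈ C 3 := hmono 2 (hmono 1 (hmem 0).1)
      have m1 : x 1 ∈ C 3 := hmono 2 (hmem 1).1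
      have m2 : x 2 ∈ C 3 := (hmem 2).1
      have m3 : x 3 ∉ C 3 := (hmem 3).2
      have m0' : x 0 ∈ C 4 := hmono 3 m0
      have m1' : x 1 ∈ C 4 := hmono 3 m1
      have m2' : x 2 ∈ C 4 := hmono 3 m2
      have m3' : x 3 ∈ C 4 := (hmem 3).1
      have m4 : x 4 ∉ C 4 := (hmem 4).2
      have e3 : C 3 = ({0,1,2,4} : Finset (Fin 6)) :=
        pin3 (C 3) (hcls 3) _ _ _ _ d01 d02 d12 m0 m1 m2 m3
      have e4 : C 4 = ({0,1,2,4} : Finset (Fin 6)) :=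
        pin3 (C 4) (hcls 4) _ _ _ _ d01 d02 d12 m0' m1' m2' m4
      rw [e4] at m3'
      rw [e3] at m3
      exact absurd m3' m3

lemma paving_H8 : PavingDim H8 2 := by
  refine ⟨?_, ⟨{0,1,2}, (mem_H8 _).mpr (by decide), by decide⟩, ?_⟩
  · intro X hX
    exact (mem_H8 X).mpr ((by decide : ∀ X : Finset (Fin 6), X.card = 2 → X ∈ H8s) X hX)
  · intro X hX
    exact ((mem_H8 X).mp hX).1

lemma tbrsc_H8 : IsTBRSC H8 :=
  ⟨Hp, 3, by norm_num, simpl_Hp, BR_Hp, trunc_Hp⟩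

lemma notBR_H8 : ¬ BooleanRepresentable H8 := by
  intro hBR
  unfold BooleanRepresentable at hBR
  rw [H8_eq] at hBR
  have h34 : ({0,3,4} : Finset (Fin 6)) ∈ H8s := by decide
  rw [hBR] at h34
  obtain ⟨k, x, C, hinj, himg, hfl, hmono, hmem⟩ := h34
  have hk : 3 = k := by
    have h := congrArg Finset.card himg
    rwa [Finset.card_image_of_injective _ hinj, Finset.card_univ, Fintype.card_fin,
      show ({0,3,4} : Finset (Fin 6)).card = 3 from by decide] at h
  subst hk
  have hx0 : x 0 ∈ ({0,3,4} : Finset (Fin 6)) := by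
    rw [himg]; exact Finset.mem_image_of_mem x (Finset.mem_univ 0)
  have hx1 : x 1 ∈ ({0,3,4} : Finset (Fin 6)) := by
    rw [himg]; exact Finset.mem_image_of_mem x (Finset.mem_univ 1)
  have d01 : x 0 ≠ x 1 := fun h => absurd (hinj h) (by decide)
  have m0 : x 0 ∈ C 2 := hmono 1 (hmem 0).1
  have m1 : x 1 ∈ C 2 := (hmem 1).1
  have m2 : x 2 ∉ C 2 := (hmem 2).2
  have hu : C 2 = Finset.univ := flat8pin (C 2) (hfl 2) _ _ d01 hx0 hx1 m0 m1
  rw [hu] at m2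
  exact m2 (Finset.mem_univ _)

theorem stmt_8 : PavingDim H8 2 ∧ IsTBRSC H8 ∧ ¬ BooleanRepresentable H8 := by
  exact ⟨paving_H8, tbrsc_H8, notBR_H8⟩
end

section
/- Let V = {1,2,3,4} and H = P_{≤2}(V) ∪ {123}. Then S = (V,H) is not a truncated boolean representable simplicial complex. -/
open scoped Classical

variable {V : Type*}

/-- All sets of size at most 2 together with the triangle `{1,2,3}`
(vertices relabelled `1,…,4 ↦ 0,…,3`). -/
def H9 : Set (Finset (Fin 4)) :=
  {X | X.card ≤ 2} ∪ {({0, 1, 2} : Finset (Fin 4))}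

lemma mem_H9_iff (X : Finset (Fin 4)) : X ∈ H9 ↔ X.card ≤ 2 ∨ X = {0, 1, 2} := by
  simp only [H9, Set.mem_union, Set.mem_setOf_eq, Set.mem_singleton_iff]

lemma flat_small {F : Finset (Fin 4)} (hF : IsFlat H9 F) {a b p : Fin 4}
    (ha : a ∈ F) (hb : b ∈ F) (hab : a ≠ b) (hp : p ∉ F) : False := by
  by_cases h3 : (3 : Fin 4) ∈ F
  · -- pick c ∈ F with c ≠ 3
    obtain ⟨c, hc, hc3⟩ : ∃ c, c ∈ F ∧ c ≠ 3 := by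
      rcases eq_or_ne a 3 with rfl | h
      · exact ⟨b, hb, fun h => hab h.symm⟩
      · exact ⟨a, ha, h⟩
    have hI : ({3, c} : Finset (Fin 4)) ∈ H9 := by
      rw [mem_H9_iff]
      left
      exact (Finset.card_insert_le _ _).trans (by simp)
    have hIF : ({3, c} : Finset (Fin 4)) ⊆ F := by
      intro x hx
      simp only [Finset.mem_insert, Finset.mem_singleton] at hx
      rcases hx with rfl | rfl <;> assumption
    have := hF _ hI hIF p hp
    rw [mem_H9_iff] at this
    rcases this with h | h
    · have hp3 : p ≠ 3 := fun h => hp (h ▸ h3)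
      have hpc : p ≠ c := fun h => hp (h ▸ hc)
      have : ({p, 3, c} : Finset (Fin 4)).card = 3 := by
        rw [Finset.card_insert_of_notMem (by simp [hp3, hpc]),
          Finset.card_insert_of_notMem (by simp [Ne.symm hc3])]
        simp
      omega
    · have : (3 : Fin 4) ∈ ({0, 1, 2} : Finset (Fin 4)) := by
        rw [← h]; simp
      exact absurd this (by decide)
  · have hI : ({a, b} : Finset (Fin 4)) ∈ H9 := by
      rw [mem_H9_iff]
      left
      exact (Finset.card_insert_le _ _).trans (by simp)
    have hIF : ({a, b} : Finset (Fin 4)) ⊆ F := by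
      intro x hx
      simp only [Finset.mem_insert, Finset.mem_singleton] at hx
      rcases hx with rfl | rfl <;> assumption
    have := hF _ hI hIF 3 h3
    rw [mem_H9_iff] at this
    rcases this with h | h
    · have h3a : (3 : Fin 4) ≠ a := fun h => h3 (h ▸ ha)
      have h3b : (3 : Fin 4) ≠ b := fun h => h3 (h ▸ hb)
      have : ({3, a, b} : Finset (Fin 4)).card = 3 := by
        rw [Finset.card_insert_of_notMem (by simp [h3a, h3b]),
          Finset.card_insert_of_notMem (by simp [hab])]
        simp
      omega
    · have : (3 : Fin 4) ∈ ({0, 1, 2} : Finset (Fin 4)) := by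
        rw [← h]; simp
      exact absurd this (by decide)

lemma not_BR_H9 : ¬ BooleanRepresentable H9 := by
  intro hBR
  have h012 : ({0, 1, 2} : Finset (Fin 4)) ∈ H9 := (mem_H9_iff _).2 (Or.inr rfl)
  rw [hBR] at h012
  obtain ⟨k, x, C, hinj, himg, hflat, hchain, hx⟩ := h012
  have hk : k = 3 := by
    have h1 : (Finset.image x Finset.univ).card = k := by
      rw [Finset.card_image_of_injective _ hinj, Finset.card_univ, Fintype.card_fin]
    have h2 : ({0, 1, 2} : Finset (Fin 4)).card = 3 := by decide
    rw [himg, h1] at h2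
    exact h2
  subst hk
  have e1 : ((0 : Fin 3).succ : Fin 4) = 1 := rfl
  have e2 : ((1 : Fin 3).castSucc : Fin 4) = 1 := rfl
  have e3 : ((1 : Fin 3).succ : Fin 4) = 2 := rfl
  have e4 : ((2 : Fin 3).castSucc : Fin 4) = 2 := rfl
  have hx0 : x 0 ∈ C 2 := by
    have := (hx 0).1
    rw [e1] at this
    have hsub := hchain 1
    rw [e2, e3] at hsub
    exact hsub this
  have hx1 : x 1 ∈ C 2 := by
    have := (hx 1).1
    rwa [e3] at this
  have hx2 : x 2 ∉ C 2 := by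
    have := (hx 2).2
    rwa [e4] at this
  have h01 : x 0 ≠ x 1 := fun h => absurd (hinj h) (by decide)
  exact flat_small (hflat 2) hx0 hx1 h01 hx2

lemma aux_H9_eq {H' : Set (Finset (Fin 4))} {k : ℕ}
    (hSC : IsSimplicialComplex H') (htr : H9 = trunc H' k) : H' = H9 := by
  have h012 : ({0, 1, 2} : Finset (Fin 4)) ∈ trunc H' k := by
    rw [← htr]; exact (mem_H9_iff _).2 (Or.inr rfl)
  have hk3 : 3 ≤ k := by
    have := h012.2
    simpa using this
  ext X
  constructor
  · intro hX
    by_cases hcard : X.card ≤ k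
    · rw [htr]; exact ⟨hX, hcard⟩
    · exfalso
      have hle : X.card ≤ 4 := by
        have := Finset.card_le_univ X
        simpa using this
      have h4 : X.card = 4 := by omega
      have hXu : X = Finset.univ := Finset.eq_univ_of_card X (by simpa using h4)
      have hsub : ({0, 1, 3} : Finset (Fin 4)) ∈ H' :=
        hSC.2 X hX _ (by rw [hXu]; exact Finset.subset_univ _)
      have : ({0, 1, 3} : Finset (Fin 4)) ∈ H9 := by
        rw [htr]
        refine ⟨hsub, ?_⟩
        have : ({0, 1, 3} : Finset (Fin 4)).card = 3 := by decide
        omega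
      rw [mem_H9_iff] at this
      rcases this with h | h
      · exact absurd h (by decide)
      · exact absurd h (by decide)
  · intro hX
    rw [htr] at hX
    exact hX.1

theorem stmt_9 : ¬ IsTBRSC H9 := by
  rintro ⟨H', k, hk, hSC, hBR, htr⟩
  have hEq : H' = H9 := aux_H9_eq hSC htr
  rw [hEq] at hBR
  exact not_BR_H9 hBR
end

section
/- Let d ≥ 2 and S = (V,H) be a paving simplicial complex of dimension d. If H = ∪_{L ∈ 𝓛} B_d(V,L) for some nonempty 𝓛 ⊆ P_{≥d}(V) \ {V} satisfying |L ∩ L'| ≤ d−1 for all distinct L, L' ∈ 𝓛, then S is boolean representable. -/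
open scoped Classical

variable {V : Type*}

/-!
Every set of fewer than `d` points is a flat of `H = ⋃_{L ∈ 𝓛} B_d(V,L)`, and so is every
`L ∈ 𝓛`: a `(d+1)`-face inside `L` would meet some other `L'` in `d` points, which
`|L ∩ L'| ≤ d - 1` forbids. Hence a face of size at most `d` is a transversal of the chain of
its initial segments topped by `V`, and a face `X` with `|X ∩ L| = d` is a transversal of the
chain of initial segments of `X ∩ L`, then `L`, then `V`. Conversely, in any complex
containing `∅`, a transversal of a chain of flats is a face: climbing the chain, each flat
contains the face built so far and misses the next point.
-/

open Finset

theorem Fin.image_snoc_univ [DecidableEq V] {k : ℕ} (x : Fin k → V) (p : V) :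
    univ.image (Fin.snoc x p : Fin (k + 1) → V) = insert p (univ.image x) := by
  rw [← coe_inj]
  simp

/-- An inductive form of `Transversal F X` that also records the top `G` of the chain. -/
inductive ChainTransversal [DecidableEq V] (F : Set (Finset V)) : Finset V → Finset V → Prop
  | nil {G : Finset V} : G ∈ F → ChainTransversal F ∅ G
  | snoc {X C G : Finset V} {p : V} : ChainTransversal F X C → G ∈ F → C ⊆ G → p ∈ G → p ∉ C →
      ChainTransversal F (insert p X) G

namespace ChainTransversal

variable [DecidableEq V] {F : Set (Finset V)} {X G : Finset V}

theorem subset_top (h : ChainTransversal F X G) : X ⊆ G := by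
  induction h with
  | nil => exact empty_subset _
  | snoc _ _ hCG hpG _ ih => exact insert_subset hpG (ih.trans hCG)

theorem top_mem (h : ChainTransversal F X G) : G ∈ F := by
  cases h with
  | nil hG => exact hG
  | snoc _ hG => exact hG

theorem of_chain : ∀ {k : ℕ} (x : Fin k → V) (C : Fin (k + 1) → Finset V), (∀ i, C i ∈ F) →
    (∀ i : Fin k, C i.castSucc ⊆ C i.succ) → (∀ i : Fin k, x i ∈ C i.succ ∧ x i ∉ C i.castSucc) →
    ChainTransversal F (univ.image x) (C (Fin.last k))
  | 0, x, C, hC, _, _ => by simpa using nil (hC _)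
  | k + 1, x, C, hC, hmono, hx => by
    rw [← Fin.snoc_init_self x, Fin.image_snoc_univ]
    exact (of_chain (Fin.init x) (fun i => C i.castSucc) (fun i => hC _)
      (fun i => hmono i.castSucc) (fun i => hx i.castSucc)).snoc (hC _) (hmono _)
      (hx _).1 (hx _).2

theorem exists_chain (h : ChainTransversal F X G) :
    ∃ (k : ℕ) (x : Fin k → V) (C : Fin (k + 1) → Finset V), Function.Injective x ∧
      X = univ.image x ∧ (∀ i, C i ∈ F) ∧ (∀ i : Fin k, C i.castSucc ⊆ C i.succ) ∧
      (∀ i : Fin k, x i ∈ C i.succ ∧ x i ∉ C i.castSucc) ∧ C (Fin.last k) = G := by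
  induction h with
  | @nil G hG =>
    exact ⟨0, Fin.elim0, fun _ => G, Function.injective_of_subsingleton _, by simp,
      fun _ => hG, fun i => i.elim0, fun i => i.elim0, rfl⟩
  | @snoc X C G p hXC hG hCG hpG hpC ih =>
    obtain ⟨k, x, C', hinj, rfl, hC', hmono, hx, rfl⟩ := ih
    have hpx : p ∉ Set.range x := by
      rintro ⟨i, rfl⟩
      exact hpC (hXC.subset_top (mem_image_of_mem x (mem_univ i)))
    refine ⟨k + 1, Fin.snoc x p, Fin.snoc C' G, Fin.snoc_injective_of_injective hinj hpx,
      (Fin.image_snoc_univ x p).symm, Fin.lastCases (by simpa using hG) (by simpa using hC'), ?_,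
      ?_, by simp⟩
    · refine Fin.lastCases (by simpa using hCG) fun i => ?_
      rw [Fin.succ_castSucc, Fin.snoc_castSucc, Fin.snoc_castSucc]
      exact hmono i
    · refine Fin.lastCases (by simp [hpG, hpC]) fun i => ?_
      rw [Fin.succ_castSucc, Fin.snoc_castSucc, Fin.snoc_castSucc, Fin.snoc_castSucc]
      exact hx i

theorem of_forall_ssubset_mem {Y : Finset V}
    (hY : ∀ Z ⊂ Y, Z ∈ F) (hG : G ∈ F) (hYG : Y ⊆ G) : ChainTransversal F Y G := by
  induction Y using Finset.induction_on generalizing G with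
  | empty => exact .nil hG
  | @insert q Y hqY ih =>
    have hY' : ∀ Z ⊂ Y, Z ∈ F := fun Z hZ => hY Z (hZ.trans_subset (subset_insert q Y))
    exact (ih hY' (hY Y (ssubset_insert hqY)) le_rfl).snoc hG ((subset_insert q Y).trans hYG)
      (hYG (mem_insert_self q Y)) hqY

theorem mem_of_isFlat {H : Set (Finset V)} (h : ChainTransversal {F | IsFlat H F} X G)
    (hempty : ∅ ∈ H) : X ∈ H := by
  induction h with
  | nil => exact hempty
  | snoc hXC _ _ _ hpC ih => exact hXC.top_mem _ ih hXC.subset_top _ hpC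

end ChainTransversal

theorem mem_tr_iff [DecidableEq V] {F : Set (Finset V)} {X : Finset V} :
    X ∈ Tr F ↔ ∃ G, ChainTransversal F X G := by
  constructor
  · rintro ⟨k, x, C, -, rfl, hC, hmono, hx⟩
    exact ⟨_, .of_chain x C hC hmono hx⟩
  · rintro ⟨G, h⟩
    obtain ⟨k, x, C, hinj, hX, hC, hmono, hx, -⟩ := h.exists_chain
    exact ⟨k, x, C, hinj, hX, hC, hmono, hx⟩

theorem tr_isFlat_subset [DecidableEq V] {H : Set (Finset V)} (hempty : ∅ ∈ H) :
    Tr {F | IsFlat H F} ⊆ H := fun _ hX =>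
  let ⟨_, h⟩ := mem_tr_iff.1 hX
  h.mem_of_isFlat hempty

theorem isFlat_univ_s14 [DecidableEq V] [Fintype V] {H : Set (Finset V)} : IsFlat H univ :=
  fun _ _ _ p hp => absurd (mem_univ p) hp

def unionBd [DecidableEq V] (d : ℕ) (𝓛 : Set (Finset V)) : Set (Finset V) :=
  {X | ∃ L ∈ 𝓛, X ∈ Bd d L}

section UnionBd

variable [DecidableEq V] {d : ℕ} {𝓛 : Set (Finset V)}

theorem mem_unionBd_of_card_le (hne : 𝓛.Nonempty) {X : Finset V} (hX : X.card ≤ d) :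
    X ∈ unionBd d 𝓛 :=
  let ⟨L, hL⟩ := hne
  ⟨L, hL, Or.inl hX⟩

theorem isFlat_unionBd_of_card_lt (hne : 𝓛.Nonempty) {F : Finset V} (hF : F.card < d) :
    IsFlat (unionBd d 𝓛) F := fun I _ hIF p _ =>
  mem_unionBd_of_card_le hne ((card_insert_le p I).trans (card_le_card hIF |>.trans_lt hF))

theorem isFlat_unionBd_of_mem (hd : 0 < d)
    (hint : ∀ L ∈ 𝓛, ∀ L' ∈ 𝓛, L ≠ L' → (L ∩ L').card ≤ d - 1)
    {L : Finset V} (hL : L ∈ 𝓛) : IsFlat (unionBd d 𝓛) L := by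
  rintro I ⟨L', hL', hI⟩ hIL p hpL
  have hinter : insert p I ∩ L = I := by
    rw [insert_inter_of_notMem hpL, inter_eq_left.2 hIL]
  have hcard : (insert p I).card = I.card + 1 := card_insert_of_notMem fun hpI => hpL (hIL hpI)
  rcases hI with hI | ⟨hIcard, hIL'⟩
  · refine ⟨L, hL, ?_⟩
    rcases Nat.lt_or_eq_of_le (show I.card ≤ d from hI) with hlt | heq
    · exact Or.inl (show (insert p I).card ≤ d by omega)
    · exact Or.inr ⟨by omega, by rw [hinter, heq]⟩
  · exfalso
    by_cases hLL : L = L'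
    · subst hLL
      rw [inter_eq_left.2 hIL] at hIL'
      omega
    · have := card_le_card (inter_subset_inter_right hIL : I ∩ L' ⊆ L ∩ L')
      have := hint L hL L' hL' hLL
      omega

theorem unionBd_subset_tr [Fintype V] (hd : 0 < d)
    (hint : ∀ L ∈ 𝓛, ∀ L' ∈ 𝓛, L ≠ L' → (L ∩ L').card ≤ d - 1) :
    unionBd d 𝓛 ⊆ Tr {F | IsFlat (unionBd d 𝓛) F} := by
  rintro X ⟨L, hL, hX⟩
  have hsmall : ∀ Y : Finset V, Y.card ≤ d → ∀ Z ⊂ Y, IsFlat (unionBd d 𝓛) Z :=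
    fun Y hY Z hZ => isFlat_unionBd_of_card_lt ⟨L, hL⟩ ((card_lt_card hZ).trans_le hY)
  refine mem_tr_iff.2 ⟨univ, ?_⟩
  rcases hX with hX | ⟨hXcard, hXL⟩
  · exact ChainTransversal.of_forall_ssubset_mem (hsmall X hX) isFlat_univ_s14 (subset_univ X)
  · obtain ⟨p, hpX, hpL⟩ : ∃ p ∈ X, p ∉ L := not_subset.1 fun hXsub => by
      rw [inter_eq_left.2 hXsub] at hXL
      omega
    have hpXL : p ∉ X ∩ L := fun h => hpL (mem_inter.1 h).2
    have hX : insert p (X ∩ L) = X := eq_of_subset_of_card_le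
      (insert_subset hpX inter_subset_left) (by rw [card_insert_of_notMem hpXL]; omega)
    rw [← hX]
    exact (ChainTransversal.of_forall_ssubset_mem (hsmall _ hXL.le)
      (isFlat_unionBd_of_mem hd hint hL) inter_subset_right).snoc isFlat_univ_s14 (subset_univ L)
      (mem_univ p) hpL

end UnionBd

theorem stmt_14_general [Fintype V] [DecidableEq V] (d : ℕ) (hd : 2 ≤ d)
    (H : Set (Finset V))
    (𝓛 : Set (Finset V)) (hne : 𝓛.Nonempty)
    (hint : ∀ L ∈ 𝓛, ∀ L' ∈ 𝓛, L ≠ L' → (L ∩ L').card ≤ d - 1)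
    (hH : H = {X : Finset V | ∃ L ∈ 𝓛, X ∈ Bd d L}) :
    BooleanRepresentable H := by
  subst hH
  exact (unionBd_subset_tr (by omega) hint).antisymm
    (tr_isFlat_subset (mem_unionBd_of_card_le hne d.zero_le))

theorem stmt_14 [Fintype V] [DecidableEq V] [Nonempty V] (d : ℕ) (hd : 2 ≤ d)
    (H : Set (Finset V)) (hS : IsSimplicialComplex H) (hp : PavingDim H d)
    (𝓛 : Set (Finset V)) (hne : 𝓛.Nonempty)
    (h𝓛 : ∀ L ∈ 𝓛, d ≤ L.card ∧ L ≠ Finset.univ)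
    (hint : ∀ L ∈ 𝓛, ∀ L' ∈ 𝓛, L ≠ L' → (L ∩ L').card ≤ d - 1)
    (hH : H = {X : Finset V | ∃ L ∈ 𝓛, X ∈ Bd d L}) :
    BooleanRepresentable H :=
  stmt_14_general d hd H 𝓛 hne hint hH
end
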